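/- arXiv:0710.3924 — 2 statements merged into one kernel-verified Lean document; each statement's English description precedes it below -/
import Mathlib

section
/- Let G be a compact topological group, V a finite-dimensional real vector space, W = V ⊕ V*, and ρ a continuous representation of G on W by linear maps preserving the natural pairing. Let 𝒥 be a linear generalized complex structure on V that commutes with ρ(g) for every g ∈ G. Then there exists a linear generalized complex structure 𝒥′ on V commuting with 𝒥 and with ρ(g) for every g ∈ G, such that ⟨−𝒥𝒥′(u), u⟩ > 0 for every nonzero u ∈ W. (This is the pointwise content of the lemma that a compact Lie group action preserving a generalized complex structure admits an invariant compatible generalized almost complex structure.) -/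
/-!
Average an inner product over the Haar measure of `G` and add its pull-back by `𝒥`: this gives a
positive definite form `B` invariant under `ρ` and `𝒥`. Write `B(u, v) = ⟨A u, v⟩` with the
natural pairing; every operator preserving both forms commutes with `A`, and `A` is
`B`-self-adjoint, hence diagonalisable with nonzero eigenvalues `μᵢ`. The involution
`S = sign(A)` is a polynomial in `A`, so it commutes with `𝒥` and `ρ`; it preserves the pairing,
and `⟨S u, u⟩ > 0` for `u ≠ 0` because in an eigenbasis the pairing is `diag(μᵢ⁻¹)`.
Then `𝒥' = S𝒥` works, since `-𝒥𝒥' = S`.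
-/

/-- For a real vector space `V`, we model `W = V ⊕ V*` as `V × (V →ₗ[ℝ] ℝ)`.
The natural pairing `⟨X + ξ, Y + η⟩ = (1/2)(η(X) + ξ(Y))`. -/
noncomputable def naturalPairing (V : Type*) [AddCommGroup V] [Module ℝ V] :
    (V × (V →ₗ[ℝ] ℝ)) → (V × (V →ₗ[ℝ] ℝ)) → ℝ :=
  fun u v => (v.2 u.1 + u.2 v.1) / 2

/-- A linear generalized complex structure on `V`: a linear map `𝒥 : W → W` with
`𝒥² = -id` preserving the natural pairing. -/
def IsLinearGCS {V : Type*} [AddCommGroup V] [Module ℝ V]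
    (J : (V × (V →ₗ[ℝ] ℝ)) →ₗ[ℝ] (V × (V →ₗ[ℝ] ℝ))) : Prop :=
  J ∘ₗ J = -LinearMap.id ∧
  ∀ u v, naturalPairing V (J u) (J v) = naturalPairing V u v

open scoped RealInnerProductSpace
open LinearMap (BilinForm)

theorem Real.sign_mul_sign_of_ne_zero {r : ℝ} (hr : r ≠ 0) : Real.sign r * Real.sign r = 1 := by
  rcases Real.sign_apply_eq_of_ne_zero r hr with h | h <;> simp [h]

theorem LinearMap.BilinForm.apply_self_pos_of_diagonal {ι M : Type*} [Fintype ι]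
    [AddCommGroup M] [Module ℝ M] (Q : BilinForm ℝ M) (b : Module.Basis ι ℝ M) (d : ι → ℝ)
    (hd : ∀ i, 0 < d i) (hQ : ∀ i, Q (b i) (b i) = d i)
    (hQ_ne : ∀ i j, i ≠ j → Q (b i) (b j) = 0)
    {w : M} (hw : w ≠ 0) : 0 < Q w w := by
  have hsum : Q w w = ∑ i, d i * b.repr w i ^ 2 := by
    rw [← Q.sum_repr_mul_repr_mul b w w, Finsupp.sum_fintype _ _ (by simp)]
    refine Finset.sum_congr rfl fun i _ => ?_
    rw [Finsupp.sum_fintype _ _ (by simp), Finset.sum_eq_single i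
      (fun j _ hji => by rw [hQ_ne i j hji.symm, smul_zero, smul_zero]) (by simp), hQ]
    simp only [smul_eq_mul]
    ring
  obtain ⟨i, hi⟩ : ∃ i, b.repr w i ≠ 0 := by
    by_contra! h
    exact hw (b.ext_elem fun i => by simp [h i])
  rw [hsum]
  exact Finset.sum_pos' (fun j _ => by have := hd j; positivity)
    ⟨i, Finset.mem_univ i, by have := hd i; positivity⟩

theorem LinearMap.IsSymmetric.exists_eigenbasis_and_polynomial_calculus
    {E : Type*} [NormedAddCommGroup E] [InnerProductSpace ℝ E] [FiniteDimensional ℝ E]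
    {T : Module.End ℝ E} (hT : T.IsSymmetric) (f : ℝ → ℝ) :
    ∃ (b : OrthonormalBasis (Fin (Module.finrank ℝ E)) ℝ E) (μ : Fin (Module.finrank ℝ E) → ℝ)
      (S : Module.End ℝ E), (∀ i, T (b i) = μ i • b i) ∧ (∀ i, S (b i) = f (μ i) • b i) ∧
      ∀ C : Module.End ℝ E, Commute C T → Commute C S := by
  let μ := hT.eigenvalues rfl
  let p : Polynomial ℝ := Lagrange.interpolate (Finset.univ.image μ) (fun x => x) f
  refine ⟨hT.eigenvectorBasis rfl, μ, Polynomial.aeval T p, hT.apply_eigenvectorBasis rfl,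
    fun i => ?_, fun C hC => Algebra.commute_of_mem_adjoin_singleton_of_commute
      (Polynomial.aeval_mem_adjoin_singleton ℝ T) hC⟩
  rw [Module.End.aeval_apply_of_hasEigenvector (hT.hasEigenvector_eigenvectorBasis rfl i)]
  congr 1
  exact Lagrange.eval_interpolate_at_node f (Set.injOn_id _)
    (Finset.mem_image_of_mem _ (Finset.mem_univ i))

theorem exists_involution_of_apply_eq_inner {E : Type*} [NormedAddCommGroup E]
    [InnerProductSpace ℝ E] [FiniteDimensional ℝ E] (P : BilinForm ℝ E) (hP : P.IsSymm)
    (A : Module.End ℝ E) (hA : ∀ u v, P (A u) v = ⟪u, v⟫) :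
    ∃ S : Module.End ℝ E, S * S = 1 ∧ (∀ u v, P (S u) (S v) = P u v) ∧
      (∀ w, w ≠ 0 → 0 < P (S w) w) ∧ ∀ C : Module.End ℝ E, Commute C A → Commute C S := by
  have hAsymm : A.IsSymmetric := fun u v => by rw [real_inner_comm, ← hA, hP.eq, hA]
  obtain ⟨b, μ, S, hAb, hSb, hSA⟩ := hAsymm.exists_eigenbasis_and_polynomial_calculus Real.sign
  have hμ : ∀ i, μ i ≠ 0 := fun i hμi => by
    have := hA (b i) (b i)
    rw [hAb, hμi, zero_smul, map_zero, LinearMap.zero_apply,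
      real_inner_self_eq_norm_sq, b.orthonormal.1 i] at this
    norm_num at this
  have hPb : ∀ i j, P (b i) (b j) = (μ i)⁻¹ * ⟪b i, b j⟫ := fun i j => by
    rw [← real_inner_smul_left, ← hA, map_smul, hAb, smul_smul,
      inv_mul_cancel₀ (hμ i), one_smul]
  have hPb_ne : ∀ i j, i ≠ j → P (b i) (b j) = 0 := fun i j hij => by
    rw [hPb, b.orthonormal.2 hij, mul_zero]
  refine ⟨S, ?_, ?_, fun w hw => ?_, hSA⟩
  · refine b.toBasis.ext fun i => ?_
    simp only [OrthonormalBasis.coe_toBasis, Module.End.mul_apply, Module.End.one_apply, hSb,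
      map_smul, smul_smul, Real.sign_mul_sign_of_ne_zero (hμ i), one_smul]
  · have : P.compl₁₂ S S = P := LinearMap.BilinForm.ext_basis b.toBasis fun i j => by
      rcases eq_or_ne i j with rfl | hij
      · simp [hSb, ← mul_assoc, Real.sign_mul_sign_of_ne_zero (hμ i)]
      · simp [hSb, hPb_ne i j hij]
    exact fun u v => LinearMap.congr_fun₂ this u v
  · refine LinearMap.BilinForm.apply_self_pos_of_diagonal (P.compl₁₂ S LinearMap.id) b.toBasis
      (fun i => Real.sign (μ i)⁻¹ * (μ i)⁻¹)
      (fun i => Real.sign_mul_pos_of_ne_zero _ (inv_ne_zero (hμ i)))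
      (fun i => ?_) (fun i j hij => by simp [hSb, hPb_ne i j hij]) hw
    simp [hSb, hPb, Real.sign_inv]

theorem exists_involution_commuting_with_isometries {W : Type*} [AddCommGroup W] [Module ℝ W]
    [FiniteDimensional ℝ W] (P B : BilinForm ℝ W) (hP : P.Nondegenerate) (hPs : P.IsSymm)
    (hBs : B.IsSymm) (hBpos : ∀ w, w ≠ 0 → 0 < B w w) :
    ∃ S : Module.End ℝ W, S * S = 1 ∧ (∀ u v, P (S u) (S v) = P u v) ∧
      (∀ w, w ≠ 0 → 0 < P (S w) w) ∧
      ∀ C : Module.End ℝ W, (∀ u v, P (C u) (C v) = P u v) → (∀ u v, B (C u) (C v) = B u v) →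
        Commute C S := by
  let A : Module.End ℝ W := (P.toDual hP).symm.toLinearMap ∘ₗ B
  have hA : ∀ u v, P (A u) v = B u v := fun u v =>
    LinearMap.BilinForm.apply_toDual_symm_apply (hB := hP) (B u) v
  have hCA : ∀ C : Module.End ℝ W, (∀ u v, P (C u) (C v) = P u v) →
      (∀ u v, B (C u) (C v) = B u v) → Commute C A := by
    intro C hCP hCB
    have hC : Function.Surjective C := LinearMap.injective_iff_surjective.mp <|
      (injective_iff_map_eq_zero C).mpr fun u hu => by
        by_contra hu0
        have := hCB u u
        rw [hu, map_zero] at this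
        exact (hBpos u hu0).ne this
    refine LinearMap.ext fun u => sub_eq_zero.mp <| hP.1 _ fun w => ?_
    obtain ⟨v, rfl⟩ := hC w
    simp only [Module.End.mul_apply, map_sub, LinearMap.sub_apply, hCP, hA, hCB, sub_self]
  let core : InnerProductSpace.Core ℝ W :=
    { inner := fun u v => B u v
      conj_inner_symm := fun u v => hBs.eq v u
      re_inner_nonneg := fun u => by
        rcases eq_or_ne u 0 with rfl | hu
        · simp
        · exact (hBpos u hu).le
      add_left := fun u v w => by simp
      smul_left := fun u v r => by simp
      definite := fun u hu => by
        by_contra hu0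
        exact (hBpos u hu0).ne' hu }
  let _ : NormedAddCommGroup W := core.toNormedAddCommGroup
  let _ : InnerProductSpace ℝ W := .ofCore core.toCore
  obtain ⟨S, hS2, hSP, hSpos, hSA⟩ := exists_involution_of_apply_eq_inner P hPs A hA
  exact ⟨S, hS2, hSP, hSpos, fun C hCP hCB => hSA C (hCA C hCP hCB)⟩

section CompactGroup

open MeasureTheory

variable {G : Type*} [Group G] [TopologicalSpace G] [IsTopologicalGroup G] [CompactSpace G]
  {W : Type*} [AddCommGroup W] [Module ℝ W]

theorem exists_invariant_bilinForm_of_continuous (ρ : G →* Module.End ℝ W)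
    (B₀ : BilinForm ℝ W) (hB₀s : B₀.IsSymm) (hB₀pos : ∀ w, w ≠ 0 → 0 < B₀ w w)
    (hB₀ρ : ∀ u v, Continuous fun g => B₀ (ρ g u) (ρ g v)) :
    ∃ B : BilinForm ℝ W, B.IsSymm ∧ (∀ w, w ≠ 0 → 0 < B w w) ∧
      ∀ g u v, B (ρ g u) (ρ g v) = B u v := by
  borelize G
  let μ : Measure G := Measure.haar
  -- averaging over `g⁻¹` lets left invariance of the Haar measure give `ρ`-invariance
  let f : W → W → G → ℝ := fun u v g => B₀ (ρ g⁻¹ u) (ρ g⁻¹ v)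
  have hf : ∀ u v, Continuous (f u v) := fun u v => (hB₀ρ u v).comp continuous_inv
  have hint : ∀ u v, Integrable (f u v) μ := fun u v =>
    (hf u v).integrable_of_hasCompactSupport (.of_compactSpace _)
  let B : BilinForm ℝ W := LinearMap.mk₂ ℝ (fun u v => ∫ g, f u v g ∂μ)
    (fun u₁ u₂ v => by
      simp only [f, map_add, LinearMap.add_apply]; exact integral_add (hint _ _) (hint _ _))
    (fun c u v => by
      simp only [f, map_smul, LinearMap.smul_apply, smul_eq_mul]; exact integral_const_mul _ _)
    (fun u v₁ v₂ => by
      simp only [f, map_add]; exact integral_add (hint _ _) (hint _ _))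
    (fun c u v => by
      simp only [f, map_smul, smul_eq_mul]; exact integral_const_mul _ _)
  refine ⟨B, ⟨fun u v => ?_⟩, fun w hw => ?_, fun h u v => ?_⟩
  · simp only [B, LinearMap.mk₂_apply, f, hB₀s.eq (ρ _ u)]
  · have hB₀nonneg : ∀ x, 0 ≤ B₀ x x := fun x => by
      rcases eq_or_ne x 0 with rfl | hx
      · simp
      · exact (hB₀pos x hx).le
    exact (hf w w).integral_pos_of_hasCompactSupport_nonneg_nonzero (.of_compactSpace _)
      (fun g => hB₀nonneg _) (x := 1) (by simpa [f] using (hB₀pos w hw).ne')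
  · have : f (ρ h u) (ρ h v) = fun g => f u v (h⁻¹ * g) := funext fun g => by
      simp only [f, mul_inv_rev, inv_inv, map_mul, Module.End.mul_apply]
    simp only [B, LinearMap.mk₂_apply, this, integral_mul_left_eq_self]

theorem exists_invariant_bilinForm [FiniteDimensional ℝ W] (ρ : G →* Module.End ℝ W)
    (hρ : ∀ w (φ : Module.Dual ℝ W), Continuous fun g => φ (ρ g w)) :
    ∃ B : BilinForm ℝ W, B.IsSymm ∧ (∀ w, w ≠ 0 → 0 < B w w) ∧
      ∀ g u v, B (ρ g u) (ρ g v) = B u v := by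
  let b := Module.finBasis ℝ W
  let B₀ : BilinForm ℝ W := ∑ i, LinearMap.BilinForm.linMulLin (b.coord i) (b.coord i)
  have hB₀ : ∀ u v, B₀ u v = ∑ i, b.coord i u * b.coord i v := fun u v => by
    simp [B₀, LinearMap.BilinForm.linMulLin_apply]
  refine exists_invariant_bilinForm_of_continuous ρ B₀ ⟨fun u v => ?_⟩ (fun w hw => ?_)
    fun u v => ?_
  · simp only [hB₀, mul_comm]
  · exact B₀.apply_self_pos_of_diagonal b (fun _ => 1) (fun _ => one_pos)
      (fun i => by simp [hB₀, Finsupp.single_apply])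
      (fun i j hij => by simp [hB₀, Finsupp.single_apply, hij]) hw
  · simp only [hB₀]
    exact continuous_finsetSum _ fun i _ => (hρ u _).mul (hρ v _)

theorem exists_invariant_bilinForm_of_commute [FiniteDimensional ℝ W] (ρ : G →* Module.End ℝ W)
    (hρ : ∀ w (φ : Module.Dual ℝ W), Continuous fun g => φ (ρ g w))
    (J : Module.End ℝ W) (hJ : J * J = -1) (hJρ : ∀ g, Commute J (ρ g)) :
    ∃ B : BilinForm ℝ W, B.IsSymm ∧ (∀ w, w ≠ 0 → 0 < B w w) ∧
      (∀ g u v, B (ρ g u) (ρ g v) = B u v) ∧ ∀ u v, B (J u) (J v) = B u v := by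
  obtain ⟨B, hBs, hBpos, hBρ⟩ := exists_invariant_bilinForm ρ hρ
  have hJJ : ∀ u, J (J u) = -u := fun u => by simpa using LinearMap.congr_fun hJ u
  refine ⟨B + B.compl₁₂ J J, hBs.add ⟨fun u v => hBs.eq _ _⟩, fun w hw => ?_,
    fun g u v => ?_, fun u v => ?_⟩
  · have hJw : J w ≠ 0 := fun h => hw (by rw [← neg_eq_zero, ← hJJ w, h, map_zero])
    exact add_pos (hBpos w hw) (hBpos (J w) hJw)
  · simp only [LinearMap.add_apply, LinearMap.compl₁₂_apply, ← Module.End.mul_apply,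
      (hJρ g).eq]
    simp only [Module.End.mul_apply, hBρ]
  · simp only [LinearMap.add_apply, LinearMap.compl₁₂_apply, hJJ, map_neg,
      LinearMap.neg_apply, neg_neg, add_comm]

end CompactGroup

section NaturalPairing

variable (V : Type*) [AddCommGroup V] [Module ℝ V]

noncomputable def naturalPairingForm : BilinForm ℝ (V × (V →ₗ[ℝ] ℝ)) :=
  LinearMap.mk₂ ℝ (naturalPairing V)
    (fun u₁ u₂ v => by
      simp only [naturalPairing, Prod.fst_add, Prod.snd_add, map_add, LinearMap.add_apply]; ring)
    (fun c u v => by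
      simp only [naturalPairing, Prod.smul_fst, Prod.smul_snd, map_smul, LinearMap.smul_apply,
        smul_eq_mul]; ring)
    (fun u v₁ v₂ => by
      simp only [naturalPairing, Prod.fst_add, Prod.snd_add, map_add, LinearMap.add_apply]; ring)
    (fun c u v => by
      simp only [naturalPairing, Prod.smul_fst, Prod.smul_snd, map_smul, LinearMap.smul_apply,
        smul_eq_mul]; ring)

theorem naturalPairingForm_apply (u v : V × (V →ₗ[ℝ] ℝ)) :
    naturalPairingForm V u v = naturalPairing V u v :=
  rfl

theorem naturalPairingForm_isSymm : (naturalPairingForm V).IsSymm :=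
  ⟨fun u v => by simp only [naturalPairingForm_apply, naturalPairing]; ring⟩

theorem naturalPairingForm_nondegenerate : (naturalPairingForm V).Nondegenerate := by
  refine (naturalPairingForm_isSymm V).isRefl.nondegenerate_iff_separatingLeft.mpr
    fun w hw => Prod.ext ?_ ?_
  · refine (Module.forall_dual_apply_eq_zero_iff ℝ w.1).mp fun η => ?_
    simpa [naturalPairingForm_apply, naturalPairing] using hw (0, η)
  · ext X
    simpa [naturalPairingForm_apply, naturalPairing] using hw (X, 0)

end NaturalPairing

/-- Continuity of `ρ` is stated weakly, through all linear functionals; in finite dimensions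
this is equivalent to continuity. -/
theorem exists_invariant_compatible_linearGCS (G : Type*) [Group G] [TopologicalSpace G]
    [IsTopologicalGroup G] [CompactSpace G]
    (V : Type*) [AddCommGroup V] [Module ℝ V] [FiniteDimensional ℝ V]
    (ρ : G →* ((V × (V →ₗ[ℝ] ℝ)) →ₗ[ℝ] (V × (V →ₗ[ℝ] ℝ))))
    (hcont : ∀ (w : V × (V →ₗ[ℝ] ℝ)) (φ : (V × (V →ₗ[ℝ] ℝ)) →ₗ[ℝ] ℝ),
      Continuous fun g : G => φ (ρ g w))
    (hpair : ∀ (g : G) (u v : V × (V →ₗ[ℝ] ℝ)),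
      naturalPairing V (ρ g u) (ρ g v) = naturalPairing V u v)
    (J : (V × (V →ₗ[ℝ] ℝ)) →ₗ[ℝ] (V × (V →ₗ[ℝ] ℝ))) (hJ : IsLinearGCS J)
    (hJρ : ∀ g : G, J ∘ₗ ρ g = ρ g ∘ₗ J) :
    ∃ J' : (V × (V →ₗ[ℝ] ℝ)) →ₗ[ℝ] (V × (V →ₗ[ℝ] ℝ)),
      IsLinearGCS J' ∧
      J ∘ₗ J' = J' ∘ₗ J ∧
      (∀ g : G, J' ∘ₗ ρ g = ρ g ∘ₗ J') ∧
      ∀ u, u ≠ 0 → 0 < naturalPairing V (-(J (J' u))) u := by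
  obtain ⟨B, hBs, hBpos, hBρ, hBJ⟩ := exists_invariant_bilinForm_of_commute ρ hcont J hJ.1 hJρ
  obtain ⟨S, hS2, hSP, hSpos, hSC⟩ := exists_involution_commuting_with_isometries
    (naturalPairingForm V) B (naturalPairingForm_nondegenerate V) (naturalPairingForm_isSymm V)
    hBs hBpos
  have hSJ : Commute J S := hSC J hJ.2 hBJ
  have hSρ : ∀ g, Commute (ρ g) S := fun g => hSC (ρ g) (hpair g) (hBρ g)
  have hJJ : ∀ u, J (J u) = -u := LinearMap.congr_fun hJ.1
  have hJS : ∀ u, J (S u) = S (J u) := LinearMap.congr_fun hSJ.eq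
  refine ⟨S * J, ⟨LinearMap.ext fun u => ?_, fun u v => ?_⟩, (hSJ.mul_right (Commute.refl J)).eq,
    fun g => ((hSρ g).mul_right (hJρ g).symm).symm.eq, fun u hu => ?_⟩
  · simp [hJS, hJJ, ← Module.End.mul_apply S S, hS2]
  · exact (hSP (J u) (J v)).trans (hJ.2 u v)
  · change 0 < naturalPairing V (-(J (S (J u)))) u
    rw [hJS, hJJ, map_neg, neg_neg]
    exact hSpos u hu
end

section
/- Let X be a set, μ : X → ℝ^m a map, and a₁, …, a_N ∈ ℝ^m. Suppose that for every ξ ∈ ℝ^m whose coordinates are linearly independent over ℚ one has ⟨μ(p), ξ⟩ ≤ max_{1 ≤ i ≤ N} ⟨a_i, ξ⟩ for all p ∈ X, where ⟨·,·⟩ is the standard inner product on ℝ^m. Then the image μ(X) is contained in the convex hull of {a₁, …, a_N}. (This is the final step in the proof that the image of the generalized moment map is the convex hull of the images of the fixed points of the torus action.) -/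
/-!
For a fixed point `x = μ p`, the set of directions `ξ` with `⟨x, ξ⟩ ≤ maxᵢ ⟨aᵢ, ξ⟩` is closed,
and by hypothesis it contains every `ξ` with `ℚ`-linearly independent coordinates. Those form a
dense set: its complement is the countable union, over nonzero `c ∈ ℚ^m`, of the proper
hyperplanes `∑ cⱼ ξⱼ = 0`, so Baire's theorem applies. Hence the inequality holds for every `ξ`,
and Hahn–Banach separation from the (closed, convex) hull of the `aᵢ` puts `x` inside it.
-/

open Set Matrix

theorem dense_setOf_apply_ne_zero {𝕜 E : Type*} [NontriviallyNormedField 𝕜] [AddCommGroup E]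
    [TopologicalSpace E] [ContinuousAdd E] [Module 𝕜 E] [ContinuousSMul 𝕜 E]
    {φ : E →ₗ[𝕜] 𝕜} (hφ : φ ≠ 0) : Dense {x | φ x ≠ 0} := by
  refine interior_eq_empty_iff_dense_compl.1 (not_nonempty_iff_eq_empty.1 fun hint => hφ ?_)
  exact LinearMap.ker_eq_top.1 ((LinearMap.ker φ).eq_top_of_nonempty_interior' hint)

theorem dense_setOf_linearIndependent_rat {ι : Type*} [Finite ι] :
    Dense {ξ : ι → ℝ | LinearIndependent ℚ ξ} := by
  classical
  have := Fintype.ofFinite ι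
  let φ (c : ι → ℚ) : (ι → ℝ) →ₗ[ℝ] ℝ := ∑ i, c i • LinearMap.proj i
  have hφ (c : ι → ℚ) (ξ : ι → ℝ) : φ c ξ = ∑ i, c i • ξ i := by simp [φ]
  have hopen (c : {c : ι → ℚ // c ≠ 0}) : IsOpen {ξ | φ c ξ ≠ 0} :=
    isOpen_ne_fun (φ c).continuous_of_finiteDimensional continuous_const
  have hdense (c : {c : ι → ℚ // c ≠ 0}) : Dense {ξ | φ c ξ ≠ 0} := by
    obtain ⟨i, hi⟩ := Function.ne_iff.1 c.2
    refine dense_setOf_apply_ne_zero fun h => hi ?_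
    simpa [hφ, Pi.single_apply] using LinearMap.congr_fun h (Pi.single i 1)
  refine (dense_iInter_of_isOpen hopen hdense).mono fun ξ hξ => ?_
  rw [mem_ofPred_eq, Fintype.linearIndependent_iff]
  intro c hc
  by_contra! hne
  exact mem_iInter.1 hξ ⟨c, Function.ne_iff.2 hne⟩ ((hφ c ξ).trans hc)

theorem mem_convexHull_of_forall_exists_le {E : Type*} [AddCommGroup E] [Module ℝ E]
    [TopologicalSpace E] [IsTopologicalAddGroup E] [ContinuousSMul ℝ E] [LocallyConvexSpace ℝ E]
    [T2Space E] {s : Set E} (hs : s.Finite) {x : E}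
    (h : ∀ f : StrongDual ℝ E, ∃ y ∈ s, f x ≤ f y) : x ∈ convexHull ℝ s := by
  rw [← iInter_halfSpaces_eq (convex_convexHull ℝ s) (hs.isClosed_convexHull (𝕜 := ℝ))]
  refine mem_iInter.2 fun f => ?_
  obtain ⟨y, hy, hle⟩ := h f
  exact ⟨y, subset_convexHull ℝ s hy, hle⟩

theorem mem_convexHull_range_of_forall_exists_dotProduct_le {ι n : Type*} [Finite ι]
    [Fintype n] (a : ι → n → ℝ) {x : n → ℝ}
    (h : ∀ ξ, ∃ i, x ⬝ᵥ ξ ≤ a i ⬝ᵥ ξ) : x ∈ convexHull ℝ (range a) := by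
  classical
  refine mem_convexHull_of_forall_exists_le (finite_range a) fun f => ?_
  obtain ⟨i, hi⟩ := h ((dotProductEquiv ℝ n).symm f.toLinearMap)
  have hf (y : n → ℝ) : f y = (dotProductEquiv ℝ n).symm f.toLinearMap ⬝ᵥ y :=
    (LinearMap.congr_fun ((dotProductEquiv ℝ n).apply_symm_apply f.toLinearMap) y).symm
  refine ⟨a i, mem_range_self i, ?_⟩
  rwa [hf, hf, dotProduct_comm, dotProduct_comm _ (a i)]

/-- If for every `ξ ∈ ℝ^m` with coordinates linearly independent over `ℚ` one has
`⟨μ(p), ξ⟩ ≤ max_i ⟨a_i, ξ⟩` for all `p`, then the image of `μ` is contained in the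
convex hull of `a₁, …, a_N`. -/
theorem image_subset_convexHull_of_rationally_independent_bounds {m N : ℕ} [NeZero N]
    {X : Type*} (μ : X → (Fin m → ℝ)) (a : Fin N → (Fin m → ℝ))
    (h : ∀ ξ : Fin m → ℝ, LinearIndependent ℚ ξ →
      ∀ p : X, ∑ j, μ p j * ξ j ≤
        Finset.univ.sup' Finset.univ_nonempty (fun i : Fin N => ∑ j, a i j * ξ j)) :
    Set.range μ ⊆ convexHull ℝ (Set.range a) := by
  rintro _ ⟨p, rfl⟩
  have hclosed : IsClosed {ξ : Fin m → ℝ | ∃ i, μ p ⬝ᵥ ξ ≤ a i ⬝ᵥ ξ} := by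
    simp only [ofPred_exists]
    exact isClosed_iUnion_of_finite fun i => isClosed_le (by fun_prop) (by fun_prop)
  have hbound : {ξ : Fin m → ℝ | LinearIndependent ℚ ξ} ⊆ {ξ | ∃ i, μ p ⬝ᵥ ξ ≤ a i ⬝ᵥ ξ} :=
    fun ξ hξ => by simpa [Finset.le_sup'_iff, dotProduct] using h ξ hξ p
  rw [← hclosed.closure_subset_iff, dense_setOf_linearIndependent_rat.closure_eq,
    univ_subset_iff, eq_univ_iff_forall] at hbound
  exact mem_convexHull_range_of_forall_exists_dotProduct_le a hbound
end
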